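/- Let F be a field, let m, n be positive integers, and let M ⊆ M_n(F) be a monoid (a set of n×n matrices containing the identity matrix and closed under matrix multiplication) such that for all C, D ∈ M one has det(C^{(m)}) = det(C)^m, det(D^{(m)}) = det(D)^m and (CD)^{(m)} = C^{(m)}D^{(m)}. Then for all A, B ∈ M_m(F) and all C, D ∈ M: det(det_1(A⊗C)) = det(A⊗C) and det_1((A⊗C)(B⊗D)) = det_1(A⊗C)·det_1(B⊗D). -/
import Mathlib


open Matrix Kronecker

/-- The partial determinant `det₁`: for `A ∈ M_{mn}(F) = M_m(F) ⊗ M_n(F)`,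
`det1 A` is the `n × n` matrix whose `(i,j)` entry is the determinant of the
block `A_{ij} ∈ M_m(F)` given by `(A_{ij})_{kl} = A (k,i) (l,j)`. -/
def det1 {F : Type*} [Field F] {m n : ℕ}
    (A : Matrix (Fin m × Fin n) (Fin m × Fin n) F) : Matrix (Fin n) (Fin n) F :=
  Matrix.of fun i j => Matrix.det (Matrix.of fun k l : Fin m => A (k, i) (l, j))

/-- The `m`-th Hadamard (entrywise) power of a matrix. -/
def hpow {F : Type*} [Monoid F] {n : ℕ} (B : Matrix (Fin n) (Fin n) F) (m : ℕ) :
    Matrix (Fin n) (Fin n) F :=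
  Matrix.of fun i j => (B i j) ^ m

lemma det1_kronecker {F : Type*} [Field F] {m n : ℕ}
    (A : Matrix (Fin m) (Fin m) F) (C : Matrix (Fin n) (Fin n) F) :
    det1 (A ⊗ₖ C) = A.det • hpow C m := by
  ext i j
  have : (Matrix.of fun k l : Fin m => (A ⊗ₖ C) (k, i) (l, j)) = C i j • A := by
    ext k l
    simp [kroneckerMap_apply, mul_comm]
  show (Matrix.of fun k l : Fin m => (A ⊗ₖ C) (k, i) (l, j)).det = _
  rw [this, Matrix.det_smul]
  simp [hpow, mul_comm]

/-- A monoid `M ⊆ M_n(F)` whose elements satisfy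
`det(C^{(m)}) = det(C)^m` and `(CD)^{(m)} = C^{(m)} D^{(m)}` yields completable
and multiplicative partial determinants on Kronecker products with elements of
`M` as second factor. -/
theorem det1_monoid {F : Type*} [Field F] {m n : ℕ} (hm : 0 < m) (hn : 0 < n)
    (M : Set (Matrix (Fin n) (Fin n) F))
    (hone : (1 : Matrix (Fin n) (Fin n) F) ∈ M)
    (hmul : ∀ C ∈ M, ∀ D ∈ M, C * D ∈ M)
    (hdet : ∀ C ∈ M, (hpow C m).det = C.det ^ m)
    (hhad : ∀ C ∈ M, ∀ D ∈ M, hpow (C * D) m = hpow C m * hpow D m) :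
    ∀ (A B : Matrix (Fin m) (Fin m) F), ∀ C ∈ M, ∀ D ∈ M,
      (det1 (A ⊗ₖ C)).det = (A ⊗ₖ C).det ∧
      det1 ((A ⊗ₖ C) * (B ⊗ₖ D)) = det1 (A ⊗ₖ C) * det1 (B ⊗ₖ D) := by
  intro A B C hC D hD
  constructor
  · rw [det1_kronecker, Matrix.det_smul, hdet C hC, Matrix.det_kronecker]
    simp
  · rw [← Matrix.mul_kronecker_mul, det1_kronecker, det1_kronecker, det1_kronecker,
      Matrix.det_mul, hhad C hC D hD, smul_mul_assoc, Matrix.mul_smul, mul_smul]
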